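/- Let x₁, x₂, x₃, x₄ denote the images of the four free generators in the free Burnside group B(4,3), and for i ∈ {1,2,3,4} let Q_i = x₁x₂⁻¹x₃x₄⁻¹ · x₁⁻¹x₂x₃⁻¹x₄ · x_i · x₄x₃⁻¹x₂x₁⁻¹ · x₄⁻¹x₃x₂⁻¹x₁ (the word x₁x₂⁻¹x₃x₄⁻¹x₅x₁⁻¹x₂x₃⁻¹x₄x₅⁻¹ x_i x₅⁻¹x₄x₃⁻¹x₂x₁⁻¹x₅x₄⁻¹x₃x₂⁻¹x₁ with x₅ set equal to the identity). Then for each i ∈ {1,2,3,4}, the element Q_i x_i⁻¹ is nontrivial in B(4,3). -/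
import Mathlib


/-- The free Burnside group `B(r, n)`: the quotient of the free group on `r` generators
by the normal closure of the set of all `n`-th powers. -/
abbrev FreeBurnsideGroup (r n : ℕ) : Type :=
  FreeGroup (Fin r) ⧸
    Subgroup.normalClosure {x : FreeGroup (Fin r) | ∃ w : FreeGroup (Fin r), x = w ^ n}

/-- The image of the `i`-th free generator in `B(4,3)`. -/
def burnsideGen (i : Fin 4) : FreeBurnsideGroup 4 3 :=
  QuotientGroup.mk (FreeGroup.of i)

/-- The element `Q_i = x₁x₂⁻¹x₃x₄⁻¹ · x₁⁻¹x₂x₃⁻¹x₄ · x_i · x₄x₃⁻¹x₂x₁⁻¹ · x₄⁻¹x₃x₂⁻¹x₁`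
of `B(4,3)` (here the generators are indexed `x₁ = burnsideGen 0, …, x₄ = burnsideGen 3`). -/
def wordQ (i : Fin 4) : FreeBurnsideGroup 4 3 :=
  let x₁ := burnsideGen 0
  let x₂ := burnsideGen 1
  let x₃ := burnsideGen 2
  let x₄ := burnsideGen 3
  x₁ * x₂⁻¹ * x₃ * x₄⁻¹ * x₁⁻¹ * x₂ * x₃⁻¹ * x₄ * burnsideGen i *
    x₄ * x₃⁻¹ * x₂ * x₁⁻¹ * x₄⁻¹ * x₃ * x₂⁻¹ * x₁

/-- A concrete model of the free Burnside group `B(3,3)` of order `3⁷`: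
carrier `(ZMod 3)⁷` with multiplication given by explicit Hall polynomials. -/
@[ext]
structure G3 where
  a : ZMod 3
  b : ZMod 3
  c : ZMod 3
  d : ZMod 3
  e : ZMod 3
  f : ZMod 3
  g : ZMod 3
deriving DecidableEq

namespace G3

def mul' (x y : G3) : G3 :=
  ⟨x.a + y.a, x.b + y.b, x.c + y.c,
   x.d + y.d + x.b * y.a,
   x.e + y.e + x.c * y.a,
   x.f + y.f + x.c * y.b,
   x.g + y.g + x.d * y.c + 2 * x.e * y.b + x.f * y.a
     + x.b * x.c * y.a + x.b * y.a * y.c + 2 * x.c * y.a * y.b⟩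

def inv' (x : G3) : G3 :=
  ⟨2 * x.a, 2 * x.b, 2 * x.c,
   2 * x.d + x.b * x.a,
   2 * x.e + x.c * x.a,
   2 * x.f + x.c * x.b,
   2 * x.g + x.d * x.c + 2 * x.e * x.b + x.f * x.a + x.a * x.b * x.c⟩

instance : Mul G3 := ⟨mul'⟩
instance : One G3 := ⟨⟨0, 0, 0, 0, 0, 0, 0⟩⟩
instance : Inv G3 := ⟨inv'⟩

lemma mul_def (x y : G3) : x * y = mul' x y := rfl
lemma inv_def (x : G3) : x⁻¹ = inv' x := rfl
lemma one_def : (1 : G3) = ⟨0, 0, 0, 0, 0, 0, 0⟩ := rfl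

instance : Group G3 where
  mul_assoc x y z := by
    ext <;> simp only [mul_def, mul'] <;> ring
  one_mul x := by
    ext <;> simp only [mul_def, mul', one_def] <;> ring
  mul_one x := by
    ext <;> simp only [mul_def, mul', one_def] <;> ring
  inv_mul_cancel x := by
    ext <;> simp only [mul_def, mul', inv_def, inv', one_def] <;>
      (ring_nf; reduce_mod_char)

lemma cube (x : G3) : x ^ 3 = 1 := by
  have : x ^ 3 = x * x * x := by rw [pow_succ, pow_succ, pow_one]
  rw [this]
  ext <;> simp only [mul_def, mul', one_def] <;> (ring_nf; reduce_mod_char)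

end G3

/-- Images of the four generators: `x₁ ↦ 1`, `x₂ ↦ c`, `x₃ ↦ b`, `x₄ ↦ a`. -/
def gmap : Fin 4 → G3 :=
  ![1, ⟨0, 0, 1, 0, 0, 0, 0⟩, ⟨0, 1, 0, 0, 0, 0, 0⟩, ⟨1, 0, 0, 0, 0, 0, 0⟩]

/-- The induced homomorphism `B(4,3) →* G3`. -/
def burnsideHom : FreeBurnsideGroup 4 3 →* G3 :=
  QuotientGroup.lift _ (FreeGroup.lift gmap) (by
    intro x hx
    have hsub : {x : FreeGroup (Fin 4) | ∃ w : FreeGroup (Fin 4), x = w ^ 3} ⊆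
        ((FreeGroup.lift gmap).ker : Subgroup (FreeGroup (Fin 4))) := by
      rintro y ⟨w, rfl⟩
      simp [MonoidHom.mem_ker, map_pow, G3.cube]
    exact Subgroup.normalClosure_le_normal hsub hx)

lemma burnsideHom_gen (i : Fin 4) : burnsideHom (burnsideGen i) = gmap i := by
  simp [burnsideHom, burnsideGen]

set_option maxRecDepth 10000 in
/-- For each `i`, the element `Q_i x_i⁻¹` is nontrivial in `B(4,3)`. -/
theorem wordQ_mul_inv_gen_ne_one :
    ∀ i : Fin 4, wordQ i * (burnsideGen i)⁻¹ ≠ 1 := by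
  intro i h
  have h2 : burnsideHom (wordQ i * (burnsideGen i)⁻¹) = 1 := by rw [h, map_one]
  rw [wordQ] at h2
  simp only [map_mul, map_inv, burnsideHom_gen] at h2
  fin_cases i <;> revert h2 <;> decide
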